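/- For every n > 3, let D_n be the duplication of the Černý automaton C_n with respect to the letter b and the state 0. Then Alice has a winning strategy in the synchronization game on D_n, she can win making at most (n−1)² + 1 moves, and she cannot guarantee a win making fewer than (n−1)² + 1 moves. -/

import Mathlib

/-- Apply a word (list of letters) to a state of a DFA with transition function `δ`. -/
def applyWord {Q A : Type*} (δ : Q → A → Q) (q : Q) : List A → Q
  | [] => q
  | a :: w => applyWord δ (δ q a) w

/-- The history (list) of letters played after `n` moves of the synchronization game,
when Alice uses strategy `σA` and Bob uses strategy `σB`; Alice moves first, i.e.
the letters at even indices are chosen by Alice and those at odd indices by Bob. -/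
def playHist {A : Type*} (σA σB : List A → A) : ℕ → List A
  | 0 => []
  | n + 1 =>
      let h := playHist σA σB n
      h ++ [if n % 2 = 0 then σA h else σB h]

/-- `w` synchronizes the position `P` (a set of states holding coins) to a single state. -/
def IsResetFrom {Q A : Type*} [DecidableEq Q] (δ : Q → A → Q) (P : Finset Q)
    (w : List A) : Prop :=
  (P.image fun q => applyWord δ q w).card = 1

/-- Alice has a winning strategy in the synchronization game starting from position `P`. -/
def AliceWins {Q A : Type*} [DecidableEq Q] (δ : Q → A → Q) (P : Finset Q) : Prop :=
  ∃ σA : List A → A, ∀ σB : List A → A, ∃ k : ℕ,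
    IsResetFrom δ P (playHist σA σB k)

/-- Alice has a strategy in the synchronization game starting from position `P` that
guarantees reaching a singleton position in a play in which Alice has chosen at most
`m` letters (after `k` letters in total, Alice has chosen `(k + 1) / 2` of them). -/
def AliceWinsWithin {Q A : Type*} [DecidableEq Q] (δ : Q → A → Q) (P : Finset Q)
    (m : ℕ) : Prop :=
  ∃ σA : List A → A, ∀ σB : List A → A, ∃ k : ℕ,
    IsResetFrom δ P (playHist σA σB k) ∧ (k + 1) / 2 ≤ m

/-- Bob has a winning strategy in the synchronization game starting from position `P`:
against every strategy of Alice the position never becomes a singleton. -/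
def BobWins {Q A : Type*} [DecidableEq Q] (δ : Q → A → Q) (P : Finset Q) : Prop :=
  ∃ σB : List A → A, ∀ σA : List A → A, ∀ k : ℕ,
    ¬ IsResetFrom δ P (playHist σA σB k)

/-- The Černý automaton `C_n`: states are residues modulo `n`, the letter `a` (here
`false`) sends `0` to `1` and fixes every other state, and the letter `b` (here `true`)
adds `1` modulo `n`. -/
def cernyStep (n : ℕ) : ZMod n → Bool → ZMod n
  | m, false => if m = 0 then 1 else m
  | m, true => m + 1

/-- The duplication of the DFA `δ` with respect to the letter `b` and the state `q0`:
states are `Q × Bool` (with `false` for `0` and `true` for `1`), and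
`(q, 0)·a = (q·a, 1)`, `(q, 1)·b = (q, 0)`, `(q, 1)·a = (q0, 1)` for `a ≠ b`. -/
def dup {Q A : Type*} [DecidableEq A] (δ : Q → A → Q) (b : A) (q0 : Q) :
    Q × Bool → A → Q × Bool
  | (q, false), a => (δ q a, true)
  | (q, true), a => if a = b then (q, false) else (q0, true)


/-!
Upper bound: Alice first plays `a`, which puts the position on layer `1` over all of `C_n`, since
`Q·a ∪ {0} = Q`. From then on, any answer of Bob other than `b` collapses layer `1` to the single
state `(0, 1)`, while each round "Alice plays `c`, Bob plays `b`" acts on the layer-`0` copy of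
`C_n` as `c`. So Alice wins by playing Černý's reset word `a (b^(n-1) a)^(n-2)`, which has length
`(n-1)²`.

Lower bound: Bob always answers `b`. After the first round the position still contains the whole
layer `0`, and each later round acts there as Alice's letter on `C_n`. So Alice's later letters
must form a reset word of `C_n`, and by Černý's bound such a word has length at least `(n-1)²`.
To prove Černý's bound we lift `C_n` to `ℕ` (`b` moves up by one, `a` moves up only from a multiple
of `n`). The lifts of the `n` states all end up congruent mod `n`, so one trajectory must gain `n`
on its neighbour, which means it uses at least `n - 1` effective `a`s. The potential
`(n-1) y + ((y-1) mod n)` is unchanged by `a` and grows by at most `n` per `b`, so this forces at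
least `(n-1)(n-2)` letters `b`; with the `n - 1` letters `a` this makes `(n-1)²`.
-/

open Finset

section Words

variable {Q A : Type*} (δ : Q → A → Q)

theorem applyWord_append (q : Q) (u v : List A) :
    applyWord δ q (u ++ v) = applyWord δ (applyWord δ q u) v := by
  induction u generalizing q with
  | nil => rfl
  | cons c u ih => exact ih (δ q c)

theorem semiconj_applyWord {Q' : Type*} {δ' : Q' → A → Q'} {f : Q → Q'}
    (h : ∀ c, Function.Semiconj f (δ · c) (δ' · c)) (w : List A) :
    Function.Semiconj f (applyWord δ · w) (applyWord δ' · w) := by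
  induction w with
  | nil => exact fun _ => rfl
  | cons c w ih => exact fun q => (ih (δ q c)).trans (congrArg (applyWord δ' · w) (h c q))

theorem applyWord_monotone [Preorder Q] (h : ∀ c, Monotone (δ · c)) (w : List A) :
    Monotone (applyWord δ · w) := by
  induction w with
  | nil => exact monotone_id
  | cons c w ih => exact ih.comp (h c)

section Potential

variable {M : Type*} [AddCommMonoid M] [PartialOrder M] [IsOrderedAddMonoid M] {Φ : Q → M}
  {g : A → M}

theorem applyWord_le_add_sum (h : ∀ q c, Φ (δ q c) ≤ Φ q + g c) (q : Q) (w : List A) :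
    Φ (applyWord δ q w) ≤ Φ q + (w.map g).sum := by
  induction w generalizing q with
  | nil => simp [applyWord]
  | cons c w ih =>
    calc Φ (applyWord δ (δ q c) w) ≤ Φ (δ q c) + (w.map g).sum := ih (δ q c)
      _ ≤ Φ q + g c + (w.map g).sum := by gcongr; exact h q c
      _ = Φ q + ((c :: w).map g).sum := by simp [add_assoc]

theorem add_sum_le_applyWord (h : ∀ q c, Φ q + g c ≤ Φ (δ q c)) (q : Q) (w : List A) :
    Φ q + (w.map g).sum ≤ Φ (applyWord δ q w) := by
  induction w generalizing q with
  | nil => simp [applyWord]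
  | cons c w ih =>
    calc Φ q + ((c :: w).map g).sum = Φ q + g c + (w.map g).sum := by simp [add_assoc]
      _ ≤ Φ (δ q c) + (w.map g).sum := by gcongr; exact h q c
      _ ≤ Φ (applyWord δ (δ q c) w) := ih (δ q c)

end Potential

variable [DecidableEq Q] {δ} {P P' : Finset Q} {u v w : List A}

theorem isResetFrom_append_iff :
    IsResetFrom δ P (u ++ v) ↔ IsResetFrom δ (P.image (applyWord δ · u)) v := by
  simp only [IsResetFrom, image_image, Function.comp_def, applyWord_append]

theorem isResetFrom_cons_iff {c : A} :
    IsResetFrom δ P (c :: w) ↔ IsResetFrom δ (P.image (δ · c)) w :=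
  isResetFrom_append_iff (u := [c])

theorem isResetFrom_nil_iff : IsResetFrom δ P [] ↔ P.card = 1 := by
  simp [IsResetFrom, applyWord]

theorem isResetFrom_of_card_eq_one (h : P.card = 1) (w : List A) : IsResetFrom δ P w := by
  obtain ⟨q, rfl⟩ := card_eq_one.mp h
  simp [IsResetFrom]

theorem IsResetFrom.append (h : IsResetFrom δ P u) (v : List A) : IsResetFrom δ P (u ++ v) :=
  isResetFrom_append_iff.mpr (isResetFrom_of_card_eq_one h v)

theorem IsResetFrom.of_prefix (h : IsResetFrom δ P u) (huv : u <+: v) : IsResetFrom δ P v := by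
  obtain ⟨t, rfl⟩ := huv
  exact h.append t

theorem IsResetFrom.nonempty (h : IsResetFrom δ P w) : P.Nonempty :=
  image_nonempty.mp (card_pos.mp (h ▸ one_pos))

theorem IsResetFrom.mono (h : IsResetFrom δ P' w) (hPP' : P ⊆ P') (hP : P.Nonempty) :
    IsResetFrom δ P w :=
  le_antisymm (h ▸ card_le_card (image_subset_image hPP')) (card_pos.mpr (hP.image _))

theorem IsResetFrom.applyWord_eq (h : IsResetFrom δ P w) {p q : Q} (hp : p ∈ P) (hq : q ∈ P) :
    applyWord δ p w = applyWord δ q w :=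
  card_le_one.mp h.le _ (mem_image_of_mem _ hp) _ (mem_image_of_mem _ hq)

end Words

section Game

variable {A : Type*}

def interleave : List A → List A → List A
  | a :: as, b :: bs => a :: b :: interleave as bs
  | _, _ => []

@[simp]
theorem interleave_nil_left (bs : List A) : interleave [] bs = [] := by
  cases bs <;> rfl

@[simp]
theorem interleave_cons_cons (a b : A) (as bs : List A) :
    interleave (a :: as) (b :: bs) = a :: b :: interleave as bs :=
  rfl

theorem interleave_append {as bs : List A} (h : as.length = bs.length) (as' bs' : List A) :
    interleave (as ++ as') (bs ++ bs') = interleave as bs ++ interleave as' bs' := by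
  induction as generalizing bs with
  | nil =>
    obtain rfl := List.length_eq_zero_iff.mp h.symm
    rfl
  | cons a as ih =>
    cases bs with
    | nil => simp at h
    | cons b bs => simp [ih (Nat.succ.inj h)]

theorem playHist_length (σA σB : List A → A) (k : ℕ) : (playHist σA σB k).length = k := by
  induction k with
  | zero => rfl
  | succ k ih => simp [playHist, ih]

theorem playHist_two_mul_succ (σA σB : List A → A) (i : ℕ) :
    playHist σA σB (2 * (i + 1)) = playHist σA σB (2 * i) ++
      [σA (playHist σA σB (2 * i)),
        σB (playHist σA σB (2 * i) ++ [σA (playHist σA σB (2 * i))])] := by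
  simp [Nat.mul_succ, playHist, Nat.add_mod]

theorem playHist_prefix (σA σB : List A → A) {k m : ℕ} (h : k ≤ m) :
    playHist σA σB k <+: playHist σA σB m := by
  induction m, h using Nat.le_induction with
  | base => exact List.prefix_rfl
  | succ m _ ih => exact ih.trans (List.prefix_append _ _)

theorem exists_playHist_const_two_mul (σA : List A → A) (b : A) (i : ℕ) :
    ∃ as : List A, as.length = i ∧
      playHist σA (fun _ => b) (2 * i) = interleave as (List.replicate i b) := by
  induction i with
  | zero => exact ⟨[], rfl, rfl⟩
  | succ i ih =>
    obtain ⟨as, has, hplay⟩ := ih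
    refine ⟨as ++ [σA (playHist σA (fun _ => b) (2 * i))], by simp [has], ?_⟩
    rw [playHist_two_mul_succ, List.replicate_succ', interleave_append (by simp [has]), hplay]
    rfl

variable {Q : Type*} [DecidableEq Q] {δ : Q → A → Q} {P : Finset Q} {m : ℕ}

theorem AliceWinsWithin.aliceWins (h : AliceWinsWithin δ P m) : AliceWins δ P := by
  obtain ⟨σA, hσA⟩ := h
  exact ⟨σA, fun σB => (hσA σB).imp fun _ => And.left⟩

theorem aliceWinsWithin_of_forall_interleave [Inhabited A] (W : List A)
    (hW : ∀ bs : List A, bs.length = W.length → IsResetFrom δ P (interleave W bs)) :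
    AliceWinsWithin δ P W.length := by
  let σA : List A → A := fun h => W.getD (h.length / 2) default
  refine ⟨σA, fun σB => ⟨2 * W.length, ?_, by omega⟩⟩
  suffices ∀ i ≤ W.length, ∃ bs : List A, bs.length = i ∧
      playHist σA σB (2 * i) = interleave (W.take i) bs by
    obtain ⟨bs, hbs, hplay⟩ := this W.length le_rfl
    rw [hplay, List.take_length]
    exact hW bs hbs
  intro i hi
  induction i with
  | zero => exact ⟨[], rfl, rfl⟩
  | succ i ih =>
    obtain ⟨bs, hbs, hplay⟩ := ih (by omega)
    have hσA : σA (playHist σA σB (2 * i)) = W[i] := by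
      simp [σA, playHist_length, List.getD_eq_getElem?_getD,
        List.getElem?_eq_getElem (by omega : i < W.length)]
    refine ⟨bs ++ [σB (playHist σA σB (2 * i) ++ [W[i]])], by simp [hbs], ?_⟩
    rw [playHist_two_mul_succ, hσA, List.take_add_one, List.getElem?_eq_getElem (by omega),
      Option.toList_some, interleave_append (by simp [hbs]; omega), hplay]
    rfl

theorem not_aliceWinsWithin_of_replicate (b : A)
    (h : ∀ as : List A, IsResetFrom δ P (interleave as (List.replicate as.length b)) →
      m < as.length) :
    ¬ AliceWinsWithin δ P m := by
  rintro ⟨σA, hσA⟩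
  obtain ⟨k, hk, hkm⟩ := hσA fun _ => b
  obtain ⟨as, has, hplay⟩ := exists_playHist_const_two_mul σA b ((k + 1) / 2)
  have hprefix := playHist_prefix σA (fun _ => b) (show k ≤ 2 * ((k + 1) / 2) by omega)
  rw [hplay, ← has] at hprefix
  have := h as (hk.of_prefix hprefix)
  omega

end Game

section Duplication

variable {Q A : Type*} [DecidableEq Q] [DecidableEq A] (δ : Q → A → Q) (b : A) (q0 : Q)

theorem image_dup_layer_false (S : Finset Q) (c : A) :
    (S ×ˢ {false}).image (dup δ b q0 · c) = S.image (δ · c) ×ˢ {true} := by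
  ext ⟨q, i⟩
  simp [dup, eq_comm]

theorem image_dup_layer_true_self (S : Finset Q) :
    (S ×ˢ {true}).image (dup δ b q0 · b) = S ×ˢ {false} := by
  ext ⟨q, i⟩
  simp [dup, eq_comm]

theorem image_dup_layer_true_of_ne {S : Finset Q} (hS : S.Nonempty) {c : A} (hc : c ≠ b) :
    (S ×ˢ {true}).image (dup δ b q0 · c) = {(q0, true)} := by
  have hconst : Set.EqOn (dup δ b q0 · c) (fun _ => (q0, true)) ↑(S ×ˢ {true}) := by
    rintro ⟨q, i⟩ hqi
    obtain ⟨-, rfl⟩ : q ∈ S ∧ i = true := by simpa using hqi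
    simp [dup, hc]
  rw [image_congr hconst, image_const (hS.product (singleton_nonempty _))]

theorem isResetFrom_dup_layer_true_of_ne {S : Finset Q} (hS : S.Nonempty) {c : A} (hc : c ≠ b)
    (w : List A) : IsResetFrom (dup δ b q0) (S ×ˢ {true}) (c :: w) := by
  rw [isResetFrom_cons_iff, image_dup_layer_true_of_ne δ b q0 hS hc]
  exact isResetFrom_of_card_eq_one (card_singleton _) w

theorem isResetFrom_dup_layer_true {S : Finset Q} {w bs : List A} (hw : IsResetFrom δ S w)
    (hbs : bs.length = w.length) (c : A) :
    IsResetFrom (dup δ b q0) (S ×ˢ {true}) (c :: interleave w bs) := by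
  induction w generalizing S bs c with
  | nil =>
    rcases eq_or_ne c b with rfl | hc
    · rw [isResetFrom_cons_iff, image_dup_layer_true_self, interleave_nil_left,
        isResetFrom_nil_iff, card_product, card_singleton, mul_one]
      exact isResetFrom_nil_iff.mp hw
    · exact isResetFrom_dup_layer_true_of_ne δ b q0 hw.nonempty hc _
  | cons x w ih =>
    obtain ⟨c', bs, rfl⟩ := List.exists_cons_of_length_eq_add_one hbs
    rcases eq_or_ne c b with rfl | hc
    · rw [isResetFrom_cons_iff, image_dup_layer_true_self, interleave_cons_cons,
        isResetFrom_cons_iff, image_dup_layer_false]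
      exact ih (isResetFrom_cons_iff.mp hw) (by simpa using hbs) c'
    · exact isResetFrom_dup_layer_true_of_ne δ b q0 hw.nonempty hc _

theorem isResetFrom_dup_layer_false_iff {S : Finset Q} (w : List A) :
    IsResetFrom (dup δ b q0) (S ×ˢ {false}) (interleave w (List.replicate w.length b)) ↔
      IsResetFrom δ S w := by
  induction w generalizing S with
  | nil =>
    rw [List.length_nil, List.replicate_zero, interleave_nil_left, isResetFrom_nil_iff,
      isResetFrom_nil_iff, card_product, card_singleton, mul_one]
  | cons x w ih =>
    rw [List.length_cons, List.replicate_succ, interleave_cons_cons, isResetFrom_cons_iff,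
      isResetFrom_cons_iff, isResetFrom_cons_iff, image_dup_layer_false, image_dup_layer_true_self,
      ih]

theorem image_univ_dup [Fintype Q] {a : A} (hab : a ≠ b) :
    univ.image (dup δ b q0 · a) = insert q0 (univ.image (δ · a)) ×ˢ {true} := by
  ext ⟨q, i⟩
  have : Nonempty Q := ⟨q0⟩
  simp [dup, hab.symm, exists_or, or_comm, eq_comm]

theorem aliceWinsWithin_dup [Fintype Q] {a : A} (hab : a ≠ b) {w : List A}
    (hw : IsResetFrom δ (insert q0 (univ.image (δ · a))) w) :
    AliceWinsWithin (dup δ b q0) univ (w.length + 1) := by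
  have : Inhabited A := ⟨a⟩
  refine aliceWinsWithin_of_forall_interleave (a :: w) fun bs hbs => ?_
  obtain ⟨c, bs, rfl⟩ := List.exists_cons_of_length_eq_add_one hbs
  rw [interleave_cons_cons, isResetFrom_cons_iff, image_univ_dup δ b q0 hab]
  exact isResetFrom_dup_layer_true δ b q0 hw (by simpa using hbs) c

end Duplication

section CernyResetWord

variable {n : ℕ}

theorem cernyStep_natCast_false {i : ℕ} (hi : i < n) :
    cernyStep n i false = ((max i 1 : ℕ) : ZMod n) := by
  rcases Nat.eq_zero_or_pos i with rfl | hpos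
  · simp [cernyStep]
  · have hne : (i : ZMod n) ≠ 0 := by
      rw [Ne, ZMod.natCast_eq_zero_iff]
      exact Nat.not_dvd_of_pos_of_lt hpos hi
    simp [cernyStep, hne, max_eq_left (Nat.one_le_iff_ne_zero.mpr hpos.ne')]

theorem applyWord_cernyStep_replicate_true (q : ZMod n) (k : ℕ) :
    applyWord (cernyStep n) q (List.replicate k true) = q + k := by
  induction k generalizing q with
  | zero => simp [applyWord]
  | succ k ih =>
    rw [List.replicate_succ, applyWord, ih, Nat.cast_succ]
    simp only [cernyStep]
    ring

def cernyRound (n : ℕ) : List Bool := false :: List.replicate (n - 1) true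

theorem applyWord_cernyRound {i : ℕ} (hi : i < n) :
    applyWord (cernyStep n) i (cernyRound n) = ((max i 1 - 1 : ℕ) : ZMod n) := by
  rw [cernyRound, applyWord, cernyStep_natCast_false hi, applyWord_cernyStep_replicate_true,
    ← Nat.cast_add, show max i 1 + (n - 1) = max i 1 - 1 + n by omega, Nat.cast_add,
    ZMod.natCast_self, add_zero]

theorem image_range_max_one_sub_one {m : ℕ} (hm : 2 ≤ m) :
    (range m).image (fun i => max i 1 - 1) = range (m - 1) := by
  ext j
  simp only [mem_image, mem_range]
  constructor
  · rintro ⟨i, hi, rfl⟩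
    omega
  · exact fun hj => ⟨j + 1, by omega, by omega⟩

theorem image_applyWord_cernyRound {m : ℕ} (h2 : 2 ≤ m) (hm : m ≤ n) :
    ((range m).image (Nat.cast : ℕ → ZMod n)).image (applyWord (cernyStep n) · (cernyRound n)) =
      (range (m - 1)).image Nat.cast := by
  rw [image_image, ← image_range_max_one_sub_one h2, image_image]
  exact image_congr fun i hi => applyWord_cernyRound (by simp at hi; omega)

def cernyResetWord (n : ℕ) : List Bool :=
  (List.replicate (n - 2) (cernyRound n)).flatten ++ [false]

theorem cernyResetWord_length (hn : 2 ≤ n) : (cernyResetWord n).length = (n - 1) ^ 2 := by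
  obtain ⟨m, rfl⟩ : ∃ m, n = m + 2 := ⟨n - 2, by omega⟩
  simp [cernyResetWord, cernyRound]
  ring

theorem isResetFrom_range_cernyRounds {m : ℕ} (h2 : 2 ≤ m) (hm : m ≤ n) :
    IsResetFrom (cernyStep n) ((range m).image Nat.cast)
      ((List.replicate (m - 2) (cernyRound n)).flatten ++ [false]) := by
  induction m, h2 using Nat.le_induction with
  | base =>
    have hone : Set.EqOn (fun i : ℕ => cernyStep n i false) (fun _ => 1) ↑(range 2) := by
      intro i hi
      simp only [coe_range, Set.mem_Iio] at hi
      simp [cernyStep_natCast_false (show i < n by omega), max_eq_right (show i ≤ 1 by omega)]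
    rw [Nat.sub_self, List.replicate_zero, List.flatten_nil, List.nil_append, isResetFrom_cons_iff,
      isResetFrom_nil_iff, image_image, Function.comp_def, image_congr hone,
      image_const (nonempty_range_iff.mpr two_ne_zero), card_singleton]
  | succ m h2 ih =>
    rw [show m + 1 - 2 = m - 2 + 1 by omega, List.replicate_succ, List.flatten_cons,
      List.append_assoc, isResetFrom_append_iff, image_applyWord_cernyRound (by omega) hm]
    simpa using ih (by omega)

variable [NeZero n]

theorem isResetFrom_cernyResetWord (hn : 2 ≤ n) :
    IsResetFrom (cernyStep n) univ (cernyResetWord n) := by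
  have huniv : (univ : Finset (ZMod n)) = (range n).image Nat.cast := by
    ext x
    simp only [mem_univ, mem_image, mem_range, true_iff]
    exact ⟨x.val, x.val_lt, x.natCast_zmod_val⟩
  rw [huniv]
  exact isResetFrom_range_cernyRounds hn le_rfl

theorem insert_zero_image_cernyStep_false :
    insert 0 (univ.image (cernyStep n · false)) = univ := by
  ext x
  by_cases hx : x = 0
  · simp [hx]
  · simpa [hx] using ⟨x, by simp [cernyStep, hx]⟩

end CernyResetWord

theorem exists_add_le_succ_of_modEq {f : ℕ → ℕ} {n : ℕ} (hf : Monotone f)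
    (hmod : ∀ i, f i ≡ f (i + 1) [MOD n]) (hlt : f 0 < f n) : ∃ i < n, f i + n ≤ f (i + 1) := by
  have hsum : ∑ i ∈ range n, (f (i + 1) - f i) ≠ 0 := by
    rw [sum_range_tsub hf]
    omega
  obtain ⟨i, hi, hne⟩ := exists_ne_zero_of_sum_ne_zero hsum
  have hdvd : n ∣ f (i + 1) - f i := (Nat.modEq_iff_dvd' (hf i.le_succ)).mp (hmod i)
  have := Nat.le_of_dvd (Nat.pos_of_ne_zero hne) hdvd
  exact ⟨i, mem_range.mp hi, by omega⟩

section CernyLowerBound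

variable {n : ℕ}

def cernyLiftStep (n : ℕ) : ℕ → Bool → ℕ
  | x, false => if (x : ZMod n) = 0 then x + 1 else x
  | x, true => x + 1

theorem natCast_cernyLiftStep (x : ℕ) (c : Bool) :
    ((cernyLiftStep n x c : ℕ) : ZMod n) = cernyStep n x c := by
  cases c
  · simp only [cernyLiftStep, cernyStep]
    split_ifs with h <;> simp [h]
  · simp [cernyLiftStep, cernyStep]

theorem cernyLiftStep_add_self (x : ℕ) (c : Bool) :
    cernyLiftStep n (x + n) c = cernyLiftStep n x c + n := by
  cases c
  · simp only [cernyLiftStep, Nat.cast_add, ZMod.natCast_self, add_zero]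
    split_ifs <;> omega
  · simp only [cernyLiftStep]
    omega

theorem cernyLiftStep_monotone (c : Bool) : Monotone (cernyLiftStep n · c) := by
  intro x y hxy
  cases c
  · simp only [cernyLiftStep]
    split_ifs with hx hy hy
    · omega
    · have : x ≠ y := by rintro rfl; exact hy hx
      omega
    · omega
    · exact hxy
  · simp only [cernyLiftStep]
    omega

theorem cernyLiftStep_le (x : ℕ) (c : Bool) : cernyLiftStep n x c ≤ x + 1 := by
  cases c
  · simp only [cernyLiftStep]
    split_ifs <;> omega
  · exact le_rfl

theorem add_toNat_le_cernyLiftStep (x : ℕ) (c : Bool) : x + c.toNat ≤ cernyLiftStep n x c := by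
  cases c
  · simp only [cernyLiftStep, Bool.toNat_false]
    split_ifs <;> omega
  · exact le_rfl

def cernyPotential (n y : ℕ) : ℕ := (n - 1) * y + ((y : ZMod n) - 1).val

variable [NeZero n]

theorem cernyPotential_cernyLiftStep_le (x : ℕ) (c : Bool) :
    cernyPotential n (cernyLiftStep n x c) ≤ cernyPotential n x + n * c.toNat := by
  cases c
  · simp only [cernyLiftStep]
    split_ifs with hx
    · have hneg : (-1 : ZMod n).val = n - 1 := by
        obtain ⟨m, rfl⟩ := Nat.exists_eq_succ_of_ne_zero (NeZero.ne n)
        simp [ZMod.val_neg_one]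
      simp [cernyPotential, hx, hneg, mul_add_one]
    · simp
  · have hval : (x : ZMod n).val ≤ ((x : ZMod n) - 1).val + 1 :=
      calc (x : ZMod n).val = ((x - 1) + 1 : ZMod n).val := by rw [sub_add_cancel]
        _ ≤ ((x : ZMod n) - 1).val + (1 : ZMod n).val := ZMod.val_add_le _ _
        _ ≤ ((x : ZMod n) - 1).val + 1 := by
          gcongr
          rw [ZMod.val_one_eq_one_mod]
          exact Nat.mod_le _ _
    have hn := NeZero.one_le (n := n)
    simp only [cernyPotential, cernyLiftStep, Nat.cast_add, Nat.cast_one, add_sub_cancel_right,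
      Bool.toNat_true, mul_one, mul_add_one]
    omega

theorem cerny_sq_le_length {w : List Bool} (hw : IsResetFrom (cernyStep n) univ w) :
    (n - 1) ^ 2 ≤ w.length := by
  set L : ℕ → ℕ := (applyWord (cernyLiftStep n) · w)
  set B := (w.map Bool.toNat).sum
  have hmono : Monotone L := applyWord_monotone (cernyLiftStep n) cernyLiftStep_monotone w
  have hcast := semiconj_applyWord (cernyLiftStep n) (f := (Nat.cast : ℕ → ZMod n))
    (fun c x => natCast_cernyLiftStep x c) w
  have hmod : ∀ i, L i ≡ L (i + 1) [MOD n] := fun i => by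
    rw [← ZMod.natCast_eq_natCast_iff, hcast i, hcast (i + 1)]
    exact hw.applyWord_eq (mem_univ _) (mem_univ _)
  have hshift : L 0 + n = L n := by
    simpa using semiconj_applyWord (cernyLiftStep n) (f := (· + n))
      (fun c x => (cernyLiftStep_add_self x c).symm) w 0
  obtain ⟨i, -, hjump⟩ :=
    exists_add_le_succ_of_modEq hmono hmod (by have := NeZero.pos n; omega)
  have hlow : i + B ≤ L i :=
    add_sum_le_applyWord (cernyLiftStep n) add_toNat_le_cernyLiftStep i w
  have hup : L (i + 1) ≤ i + 1 + w.length := by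
    simpa only [id, List.map_const', List.sum_replicate, smul_eq_mul, mul_one] using
      applyWord_le_add_sum (cernyLiftStep n) (Φ := id) (g := fun _ => 1) cernyLiftStep_le
        (i + 1) w
  have hpot : cernyPotential n (L (i + 1)) ≤ cernyPotential n (i + 1) + n * B := by
    simpa [List.sum_map_mul_left] using
      applyWord_le_add_sum (cernyLiftStep n) (g := fun c => n * c.toNat)
        cernyPotential_cernyLiftStep_le (i + 1) w
  have hres := ZMod.val_lt (((i + 1 : ℕ) : ZMod n) - 1)
  obtain ⟨m, rfl⟩ : ∃ m, n = m + 1 := ⟨n - 1, by have := NeZero.pos n; omega⟩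
  simp only [cernyPotential, Nat.add_sub_cancel] at hpot ⊢
  have := Nat.mul_le_mul_left m (show i + 1 + B + m ≤ L (i + 1) by omega)
  nlinarith

end CernyLowerBound

theorem lt_length_of_isResetFrom_dup_cerny {n : ℕ} [NeZero n] {as : List Bool}
    (h : IsResetFrom (dup (cernyStep n) true 0) univ
      (interleave as (List.replicate as.length true))) :
    (n - 1) ^ 2 < as.length := by
  cases as with
  | nil =>
    rw [List.length_nil, List.replicate_zero, interleave_nil_left, isResetFrom_nil_iff, card_univ,
      Fintype.card_prod, ZMod.card, Fintype.card_bool] at h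
    omega
  | cons c as =>
    rw [List.length_cons, List.replicate_succ, interleave_cons_cons, isResetFrom_cons_iff,
      isResetFrom_cons_iff] at h
    have hsub : univ ×ˢ {false} ⊆
        (univ.image (dup (cernyStep n) true 0 · c)).image (dup (cernyStep n) true 0 · true) := by
      rintro ⟨q, i⟩ hq
      obtain rfl : i = false := by simpa using hq
      simp only [mem_image, mem_univ, true_and, exists_exists_eq_and]
      cases c
      · by_cases hq0 : q = 0
        · exact ⟨(0, true), by simp [dup, hq0]⟩
        · exact ⟨(q, false), by simp [dup, cernyStep, hq0]⟩
      · exact ⟨(q - 1, false), by simp [dup, cernyStep]⟩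
    have hreset := (isResetFrom_dup_layer_false_iff _ _ _ as).mp
      (h.mono hsub ⟨(0, false), by simp⟩)
    have := cerny_sq_le_length hreset
    rw [List.length_cons]
    omega

/-- For every `n > 3`, let `D_n` be the duplication of the Černý automaton `C_n` with
respect to the letter `b` (here `true`) and the state `0`. Then Alice has a winning
strategy in the synchronization game on `D_n`, she can win making at most `(n-1)² + 1`
moves, and she cannot guarantee a win making fewer than `(n-1)² + 1` moves. -/
theorem alice_on_duplicated_cerny (n : ℕ) [NeZero n] (hn : 3 < n) :
    AliceWins (dup (cernyStep n) true (0 : ZMod n)) Finset.univ ∧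
      AliceWinsWithin (dup (cernyStep n) true (0 : ZMod n)) Finset.univ ((n - 1) ^ 2 + 1) ∧
      ¬ AliceWinsWithin (dup (cernyStep n) true (0 : ZMod n)) Finset.univ ((n - 1) ^ 2) := by
  have hreset : IsResetFrom (cernyStep n) (insert 0 (univ.image (cernyStep n · false)))
      (cernyResetWord n) := by
    rw [insert_zero_image_cernyStep_false]
    exact isResetFrom_cernyResetWord (by omega)
  have hwin := aliceWinsWithin_dup (cernyStep n) true 0 Bool.false_ne_true hreset
  rw [cernyResetWord_length (by omega)] at hwin
  exact ⟨hwin.aliceWins, hwin,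
    not_aliceWinsWithin_of_replicate true fun _ => lt_length_of_isResetFrom_dup_cerny⟩
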